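/- For all a > 0 and all x ∈ ℂ, the identity 1F2(a − 1/2; a, 2a − 1; x) = [0F1(; a; x/4)]² holds, provided a ≠ 1/2 and 2a−1 ∉ −ℕ so that both sides are defined. -/
import Mathlib

/-- Rising factorial of a real number. -/
noncomputable def risingR (a : ℝ) (n : ℕ) : ℝ := (ascPochhammer ℝ n).eval a

open Finset

lemma risingR_zero (x : ℝ) : risingR x 0 = 1 := by simp [risingR]

lemma risingR_succ (x : ℝ) (n : ℕ) : risingR x (n+1) = risingR x n * (x + n) :=
  ascPochhammer_succ_eval n x

lemma risingR_succ_left (x : ℝ) (n : ℕ) : risingR x (n+1) = x * risingR (x+1) n := by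
  simp [risingR, ascPochhammer_succ_left, Polynomial.eval_comp]

lemma risingR_pos {x : ℝ} (hx : 0 < x) (n : ℕ) : 0 < risingR x n :=
  ascPochhammer_pos n x hx

lemma risingR_add (x : ℝ) (m n : ℕ) :
    risingR x (m + n) = risingR x m * risingR (x + m) n := by
  induction n with
  | zero => simp [risingR_zero]
  | succ n ih =>
    rw [← add_assoc, risingR_succ, ih, risingR_succ]
    push_cast
    ring

lemma risingR_reflect (x : ℝ) (n : ℕ) :
    risingR x n = (-1)^n * risingR (1 - x - n) n := by
  induction n generalizing x with
  | zero => simp [risingR_zero]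
  | succ n ih =>
    rw [risingR_succ, ih x]
    have h1 : (1 : ℝ) - x - (n+1 : ℕ) = -x - n := by push_cast; ring
    rw [h1, risingR_succ_left]
    have h2 : (-x - (n:ℝ)) + 1 = 1 - x - n := by ring
    rw [h2]
    push_cast
    ring

lemma risingR_ne_zero {x : ℝ} (hx : ∀ k : ℕ, x ≠ -(k : ℝ)) (n : ℕ) : risingR x n ≠ 0 := by
  simp only [risingR, ne_eq, ascPochhammer_eval_eq_zero_iff]
  rintro ⟨k, -, hk⟩
  exact hx k (by linarith [hk])

lemma risingR_duplication (x : ℝ) (n : ℕ) :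
    risingR (2*x) (2*n) = 4^n * risingR x n * risingR (x + 1/2) n := by
  induction n with
  | zero => simp [risingR_zero]
  | succ n ih =>
    have h : 2*(n+1) = 2*n + 1 + 1 := by ring
    rw [h, risingR_succ, risingR_succ, ih, risingR_succ, risingR_succ]
    push_cast
    ring

lemma risingR_vandermonde (n : ℕ) (x y : ℝ) :
    risingR (x + y) n
      = ∑ k ∈ range (n+1), (n.choose k : ℝ) * risingR x k * risingR y (n-k) := by
  induction n generalizing x y with
  | zero => simp [risingR_zero]
  | succ n ih =>
    rw [risingR_succ, ih x y, Finset.sum_mul]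
    have hsplit : ∀ k ∈ range (n+1),
        (n.choose k : ℝ) * risingR x k * risingR y (n-k) * (x + y + n)
        = (n.choose k : ℝ) * risingR x (k+1) * risingR y (n-k)
          + (n.choose k : ℝ) * risingR x k * risingR y (n-k+1) := by
      intro k hk
      rw [mem_range] at hk
      have hk' : k ≤ n := Nat.lt_succ_iff.mp hk
      have : (x + y + (n:ℝ)) = (x + k) + (y + (n - k : ℕ)) := by
        have : ((n - k : ℕ) : ℝ) = (n : ℝ) - k := by
          rw [Nat.cast_sub hk']
        rw [this]; ring
      rw [this, risingR_succ, risingR_succ]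
      ring
    rw [Finset.sum_congr rfl hsplit, Finset.sum_add_distrib]
    rw [Finset.sum_range_succ' (fun k => (((n+1).choose k : ℝ)) * risingR x k * risingR y (n+1-k)) (n+1)]
    simp only [Nat.choose_succ_succ, Nat.succ_sub_succ, Nat.cast_add, Nat.choose_zero_right,
      Nat.cast_one, risingR_zero, Nat.sub_zero, add_mul, one_mul, mul_one]
    rw [Finset.sum_add_distrib]
    have hB : ∑ k ∈ range (n+1), (n.choose k : ℝ) * risingR x k * risingR y (n-k+1)
        = (∑ k ∈ range (n+1), (n.choose (k+1) : ℝ) * risingR x (k+1) * risingR y (n-k))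
          + risingR y (n+1) := by
      rw [Finset.sum_range_succ' (fun k => (n.choose k : ℝ) * risingR x k * risingR y (n-k+1)) n,
        Finset.sum_range_succ (fun k => (n.choose (k+1) : ℝ) * risingR x (k+1) * risingR y (n-k)) n]
      simp only [Nat.choose_succ_self, Nat.cast_zero, zero_mul, add_zero,
        Nat.choose_zero_right, Nat.cast_one, risingR_zero, Nat.sub_zero, one_mul, mul_one]
      congr 1
      refine Finset.sum_congr rfl (fun k hk => ?_)
      rw [mem_range] at hk
      have : n - (k+1) + 1 = n - k := by omega
      rw [this]
    rw [hB]
    ring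

lemma key_poly (a : ℝ) (n : ℕ) :
    ∑ k ∈ range (n+1),
        (n.choose k : ℝ) * risingR (a + k) (n-k) * risingR (a + (n-k : ℕ)) k
      = risingR (2*a - 1 + n) n := by
  have h : ∀ k ∈ range (n+1),
      (n.choose k : ℝ) * risingR (a + k) (n-k) * risingR (a + (n-k : ℕ)) k
      = (-1:ℝ)^n * ((n.choose k : ℝ) * risingR (1-a-n) k * risingR (1-a-n) (n-k)) := by
    intro k hk
    rw [mem_range, Nat.lt_succ_iff] at hk
    have hc : ((n-k : ℕ) : ℝ) = (n:ℝ) - k := Nat.cast_sub hk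
    rw [risingR_reflect (a + k) (n-k), risingR_reflect (a + ((n-k:ℕ):ℝ)) k]
    have e1 : (1:ℝ) - (a + k) - ((n-k:ℕ):ℝ) = 1 - a - n := by rw [hc]; ring
    have e2 : (1:ℝ) - (a + ((n-k:ℕ):ℝ)) - k = 1 - a - n := by rw [hc]; ring
    rw [e1, e2]
    have hsgn : ((-1:ℝ))^(n-k) * (-1)^k = (-1)^n := by
      rw [← pow_add, Nat.sub_add_cancel hk]
    linear_combination ((n.choose k:ℝ) * risingR (1-a-n) k * risingR (1-a-n) (n-k)) * hsgn
  rw [Finset.sum_congr rfl h, ← Finset.mul_sum, ← risingR_vandermonde]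
  rw [risingR_reflect ((1-a-(n:ℝ)) + (1-a-n)) n]
  have e3 : (1:ℝ) - ((1-a-(n:ℝ)) + (1-a-n)) - n = 2*a - 1 + n := by ring
  rw [e3, ← mul_assoc, ← pow_add, ← two_mul, pow_mul]
  norm_num

lemma coeff_id (a : ℝ) (ha : 0 < a) (h3 : ∀ k : ℕ, 2*a-1 ≠ -(k : ℝ)) (n : ℕ) :
    ∑ k ∈ range (n+1),
        1/(risingR a k * k.factorial * (risingR a (n-k) * (n-k).factorial))
      = 4^n * risingR (a - 1/2) n / (risingR a n * risingR (2*a-1) n * n.factorial) := by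
  have hRa : ∀ m, (0:ℝ) < risingR a m := fun m => risingR_pos ha m
  have hR2 : risingR (2*a-1) n ≠ 0 := risingR_ne_zero h3 n
  have key : risingR (2*a-1+n) n * risingR (2*a-1) n
      = 4^n * risingR (a-1/2) n * risingR a n := by
    have hdup := risingR_duplication (a - 1/2) n
    rw [show 2*(a-1/2) = 2*a-1 by ring, show a - 1/2 + 1/2 = a by ring] at hdup
    rw [mul_comm, ← risingR_add, ← two_mul, hdup]
  have hterm : ∀ k ∈ range (n+1),
      1/(risingR a k * k.factorial * (risingR a (n-k) * (n-k).factorial))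
      = ((n.choose k : ℝ) * risingR (a + k) (n-k) * risingR (a + (n-k : ℕ)) k)
          / (risingR a n * risingR a n * n.factorial) := by
    intro k hk
    rw [mem_range, Nat.lt_succ_iff] at hk
    have e1 : risingR a n = risingR a k * risingR (a+k) (n-k) := by
      rw [← risingR_add, Nat.add_sub_cancel' hk]
    have e2 : risingR a n = risingR a (n-k) * risingR (a + (n-k:ℕ)) k := by
      rw [← risingR_add, Nat.sub_add_cancel hk]
    have e3 : (n.factorial : ℝ) = n.choose k * k.factorial * (n-k).factorial := by
      exact_mod_cast (Nat.choose_mul_factorial_mul_factorial hk).symm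
    have d1 : (0:ℝ) < risingR a k * k.factorial * (risingR a (n-k) * (n-k).factorial) := by
      have := hRa k; have := hRa (n-k)
      have h1 : (0:ℝ) < (k.factorial:ℝ) := by exact_mod_cast k.factorial_pos
      have h2 : (0:ℝ) < ((n-k).factorial:ℝ) := by exact_mod_cast (n-k).factorial_pos
      positivity
    have d2 : (0:ℝ) < risingR a n * risingR a n * n.factorial := by
      have := hRa n
      have h1 : (0:ℝ) < (n.factorial:ℝ) := by exact_mod_cast n.factorial_pos
      positivity
    rw [div_eq_div_iff d1.ne' d2.ne']
    nth_rewrite 1 [e1]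
    nth_rewrite 1 [e2]
    rw [e3]
    ring
  rw [Finset.sum_congr rfl hterm, ← Finset.sum_div, key_poly]
  have hn : (0:ℝ) < (n.factorial : ℝ) := by exact_mod_cast n.factorial_pos
  have d2 : risingR a n * risingR a n * (n.factorial:ℝ) ≠ 0 := by
    have := hRa n; positivity
  have d3 : risingR a n * risingR (2*a-1) n * (n.factorial:ℝ) ≠ 0 := by
    exact mul_ne_zero (mul_ne_zero (hRa n).ne' hR2) hn.ne'
  rw [div_eq_div_iff d2 d3]
  linear_combination (risingR a n * (n.factorial:ℝ)) * key

lemma risingR_ge (a : ℝ) (ha : 0 < a) (n : ℕ) : min 1 a ≤ risingR a n := by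
  induction n with
  | zero => simp [risingR_zero]
  | succ n ih =>
    rw [risingR_succ]
    rcases Nat.eq_zero_or_pos n with h | h
    · subst h; simp [risingR_zero, min_le_iff]
    · have h1 : (1:ℝ) ≤ a + n := by
        have : (1:ℝ) ≤ (n:ℝ) := by exact_mod_cast h
        linarith
      calc min 1 a ≤ risingR a n := ih
        _ = risingR a n * 1 := (mul_one _).symm
        _ ≤ risingR a n * (a + n) :=
            mul_le_mul_of_nonneg_left h1 (risingR_pos ha n).le

lemma summable_aux (a : ℝ) (ha : 0 < a) (x : ℂ) :
    Summable (fun n : ℕ => ‖((1/(risingR a n * n.factorial) : ℝ) : ℂ) * (x/4)^n‖) := by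
  have hmin : 0 < min 1 a := lt_min one_pos ha
  have hg : Summable (fun n : ℕ => 1/(min 1 a) * (‖x/4‖^n / n.factorial)) :=
    (Real.summable_pow_div_factorial ‖x/4‖).mul_left _
  apply Summable.of_nonneg_of_le (fun n => norm_nonneg _) (fun n => ?_) hg
  have hR := risingR_pos ha n
  have hf : (0:ℝ) < (n.factorial : ℝ) := by exact_mod_cast n.factorial_pos
  rw [norm_mul, norm_pow, Complex.norm_real, Real.norm_eq_abs,
    abs_of_pos (by positivity : (0:ℝ) < 1/(risingR a n * n.factorial))]
  have hle : 1 / risingR a n ≤ 1 / (min 1 a) :=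
    one_div_le_one_div_of_le hmin (risingR_ge a ha n)
  have h2 : (0:ℝ) ≤ ‖x/4‖^n / n.factorial := by positivity
  calc 1/(risingR a n * n.factorial) * ‖x/4‖^n
      = (1/risingR a n) * (‖x/4‖^n / n.factorial) := by ring
    _ ≤ (1/(min 1 a)) * (‖x/4‖^n / n.factorial) := mul_le_mul_of_nonneg_right hle h2

/-- Bailey's identity `1F2(a - 1/2; a, 2a-1; x) = [0F1(; a; x/4)]²` for `a > 0`
with `a ≠ 1/2` and `2a - 1 ∉ -ℕ`. -/
theorem oneFtwo_eq_zeroFone_sq (a : ℝ) (ha : 0 < a) (ha2 : a ≠ 1 / 2)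
    (ha3 : ∀ k : ℕ, 2 * a - 1 ≠ -(k : ℝ)) :
    ∀ x : ℂ,
      (∑' n : ℕ,
        ((risingR (a - 1 / 2) n /
            (risingR a n * risingR (2 * a - 1) n * n.factorial) : ℝ) : ℂ) * x ^ n)
      = (∑' n : ℕ, ((1 / (risingR a n * n.factorial) : ℝ) : ℂ) * (x / 4) ^ n) ^ 2 := by
  intro x
  have hs := summable_aux a ha x
  rw [sq, tsum_mul_tsum_eq_tsum_sum_antidiagonal_of_summable_norm hs hs]
  refine tsum_congr fun n => ?_
  rw [Finset.Nat.sum_antidiagonal_eq_sum_range_succ_mk]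
  have hterm : ∀ k ∈ Finset.range (n+1),
      ((1 / (risingR a k * k.factorial) : ℝ) : ℂ) * (x / 4) ^ k *
        (((1 / (risingR a (n-k) * (n-k).factorial) : ℝ) : ℂ) * (x / 4) ^ (n-k))
      = ((1/(risingR a k * k.factorial * (risingR a (n-k) * (n-k).factorial)) : ℝ) : ℂ)
          * (x/4)^n := by
    intro k hk
    rw [Finset.mem_range, Nat.lt_succ_iff] at hk
    have : (x/4)^k * (x/4)^(n-k) = (x/4)^n := by
      rw [← pow_add, Nat.add_sub_cancel' hk]
    push_cast
    rw [← this]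
    ring
  rw [Finset.sum_congr rfl hterm, ← Finset.sum_mul, ← Complex.ofReal_sum,
    coeff_id a ha ha3 n]
  have h4 : ((4:ℂ))^n ≠ 0 := by norm_num
  have key4 : ∀ c : ℝ, ((4^n * c : ℝ) : ℂ) * (x/4)^n = (c : ℂ) * x^n := by
    intro c
    rw [div_pow]
    push_cast
    rw [mul_comm ((4:ℂ)^n) (c:ℂ), mul_assoc,
      mul_comm ((4:ℂ)^n) (x^n/4^n), div_mul_cancel₀ _ h4]
  rw [mul_div_assoc]
  exact (key4 _).symm
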